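/- Let ω ∈ 𝕋 with associated data (I, J, L, L′, M, M′, σ) and let w = w_{k,+} be the associated permutation of {1,…,p}. For a strictly upper triangular p×p complex matrix a, the following are equivalent: (1) there exist matrices b (p×q), c (q×p), d (q×q) such that the block matrix (a b; c d) belongs to D_ω; (2) a_{σ(j),σ(j′)} = 0 for all j, j′ ∈ J with j ≥ j′, every row of a indexed by an element of L′ is zero, and every column of a indexed by an element of L is zero; (3) a_{w(i),w(j)} = 0 for all 1 ≤ j ≤ i ≤ p. -/
import Mathlib


open scoped Classical
open Matrix

noncomputable section

/-- A partial permutation matrix: entries in `{0,1}`, at most one `1` in each row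
and in each column. -/
def IsPartialPerm {m n : ℕ} (τ : Matrix (Fin m) (Fin n) ℂ) : Prop :=
  (∀ i j, τ i j = 0 ∨ τ i j = 1) ∧
  (∀ i j j', τ i j = 1 → τ i j' = 1 → j = j') ∧
  (∀ i i' j, τ i j = 1 → τ i' j = 1 → i = i')

/-- `(p+q) × r` complex matrices, rows indexed by `Fin p ⊕ Fin q`. -/
abbrev MatT (p q r : ℕ) := Matrix (Fin p ⊕ Fin q) (Fin r) ℂ

/-- The set `𝕋`: `(p+q) × r` matrices of rank `r` whose top `p × r` and bottom
`q × r` blocks are partial permutation matrices. -/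
def InT {p q r : ℕ} (ω : MatT p q r) : Prop :=
  ω.rank = r ∧
  IsPartialPerm (Matrix.of fun (i : Fin p) (c : Fin r) => ω (Sum.inl i) c) ∧
  IsPartialPerm (Matrix.of fun (j : Fin q) (c : Fin r) => ω (Sum.inr j) c)

/-- The permutation matrix of `w`: `(P_w)_{i,j} = 1` iff `i = w j`. -/
def permMat {r : ℕ} (w : Equiv.Perm (Fin r)) : Matrix (Fin r) (Fin r) ℂ :=
  Matrix.of fun i j => if i = w j then 1 else 0

/-- `[ω]`, the column space of `ω`, as a subspace of `ℂ^{p+q}`. -/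
def colSpace {p q r : ℕ} (ω : MatT p q r) : Submodule ℂ (Fin p ⊕ Fin q → ℂ) :=
  LinearMap.range ω.mulVecLin

/-- `i ∈ I`: some column of `ω` has a `1` in row `i` (top block) and a `1` in some
bottom row. -/
def memI {p q r : ℕ} (ω : MatT p q r) (i : Fin p) : Prop :=
  ∃ c, ω (Sum.inl i) c = 1 ∧ ∃ j : Fin q, ω (Sum.inr j) c = 1

/-- `i ∈ L`: some column of `ω` has a `1` in row `i` (top block) and no other
nonzero entry. -/
def memL {p q r : ℕ} (ω : MatT p q r) (i : Fin p) : Prop :=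
  ∃ c, ω (Sum.inl i) c = 1 ∧ ∀ k, k ≠ Sum.inl i → ω k c = 0

/-- `i ∈ L'`: row `i` of the top block is zero. -/
def memL' {p q r : ℕ} (ω : MatT p q r) (i : Fin p) : Prop :=
  ∀ c, ω (Sum.inl i) c = 0

/-- `j ∈ J`: some column of `ω` has a `1` in row `p+j` and a `1` in some top row. -/
def memJ {p q r : ℕ} (ω : MatT p q r) (j : Fin q) : Prop :=
  ∃ c, ω (Sum.inr j) c = 1 ∧ ∃ i : Fin p, ω (Sum.inl i) c = 1

/-- `j ∈ M`: some column of `ω` has a `1` in row `p+j` and no other nonzero entry. -/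
def memM {p q r : ℕ} (ω : MatT p q r) (j : Fin q) : Prop :=
  ∃ c, ω (Sum.inr j) c = 1 ∧ ∀ k, k ≠ Sum.inr j → ω k c = 0

/-- `j ∈ M'`: row `p+j` of `ω` (i.e. row `j` of the bottom block) is zero. -/
def memM' {p q r : ℕ} (ω : MatT p q r) (j : Fin q) : Prop :=
  ∀ c, ω (Sum.inr j) c = 0

/-- The conormal direction `D_ω`: block matrices `(a b; c d)` with `a, d` strictly
upper triangular, column space contained in `[ω]`, and `[ω]` contained in the
kernel. -/
def Dset {p q r : ℕ} (ω : MatT p q r) :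
    Set (Matrix (Fin p ⊕ Fin q) (Fin p ⊕ Fin q) ℂ) :=
  {x | (∀ i j : Fin p, j ≤ i → x (Sum.inl i) (Sum.inl j) = 0) ∧
       (∀ i j : Fin q, j ≤ i → x (Sum.inr i) (Sum.inr j) = 0) ∧
       LinearMap.range x.mulVecLin ≤ colSpace ω ∧
       colSpace ω ≤ LinearMap.ker x.mulVecLin}

section AuxLemmas

variable {p q r : ℕ} {ω : MatT p q r}

lemma h01 (hω : InT ω) (k : Fin p ⊕ Fin q) (c : Fin r) : ω k c = 0 ∨ ω k c = 1 := by
  rcases k with i | j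
  · exact hω.2.1.1 i c
  · exact hω.2.2.1 j c

lemma rowTop (hω : InT ω) {i : Fin p} {c c' : Fin r}
    (h : ω (Sum.inl i) c = 1) (h' : ω (Sum.inl i) c' = 1) : c = c' :=
  hω.2.1.2.1 i c c' h h'

lemma colTop (hω : InT ω) {i i' : Fin p} {c : Fin r}
    (h : ω (Sum.inl i) c = 1) (h' : ω (Sum.inl i') c = 1) : i = i' :=
  hω.2.1.2.2 i i' c h h'

lemma rowBot (hω : InT ω) {j : Fin q} {c c' : Fin r}
    (h : ω (Sum.inr j) c = 1) (h' : ω (Sum.inr j) c' = 1) : c = c' :=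
  hω.2.2.2.1 j c c' h h'

lemma colBot (hω : InT ω) {j j' : Fin q} {c : Fin r}
    (h : ω (Sum.inr j) c = 1) (h' : ω (Sum.inr j') c = 1) : j = j' :=
  hω.2.2.2.2 j j' c h h'

variable {σ : Fin q → Fin p}

/-- abbreviation for the hypothesis on σ -/
def SigmaSpec (ω : MatT p q r) (σ : Fin q → Fin p) : Prop :=
  ∀ j, memJ ω j → ∃ c, ω (Sum.inl (σ j)) c = 1 ∧ ω (Sum.inr j) c = 1

lemma sigma_col (hω : InT ω) (hσ : SigmaSpec ω σ) {j : Fin q} {c : Fin r}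
    (hj : memJ ω j) (hc : ω (Sum.inr j) c = 1) : ω (Sum.inl (σ j)) c = 1 := by
  obtain ⟨c₀, h1, h2⟩ := hσ j hj
  rwa [rowBot hω hc h2]

lemma memJ_of {j : Fin q} {i : Fin p} {c : Fin r}
    (hB : ω (Sum.inr j) c = 1) (hT : ω (Sum.inl i) c = 1) : memJ ω j :=
  ⟨c, hB, i, hT⟩

lemma sigma_spec (hω : InT ω) (hσ : SigmaSpec ω σ) {j : Fin q} {i : Fin p} {c : Fin r}
    (hB : ω (Sum.inr j) c = 1) (hT : ω (Sum.inl i) c = 1) : σ j = i :=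
  colTop hω (sigma_col hω hσ (memJ_of hB hT) hB) hT

lemma top_eq_bot (hω : InT ω) (hσ : SigmaSpec ω σ) {j : Fin q}
    (hj : memJ ω j) (c : Fin r) : ω (Sum.inl (σ j)) c = ω (Sum.inr j) c := by
  obtain ⟨c₀, h1, h2⟩ := hσ j hj
  rcases h01 hω (Sum.inr j) c with h | h
  · rcases h01 hω (Sum.inl (σ j)) c with h' | h'
    · rw [h, h']
    · rw [rowTop hω h' h1] at h
      rw [h2] at h; exact absurd h one_ne_zero
  · rw [h, sigma_col hω hσ hj h]

lemma memL_of (hω : InT ω) {i : Fin p} {c : Fin r}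
    (hT : ω (Sum.inl i) c = 1) (hB : ∀ j, ω (Sum.inr j) c ≠ 1) : memL ω i := by
  refine ⟨c, hT, ?_⟩
  rintro (i' | j') hk
  · rcases h01 hω (Sum.inl i') c with h | h
    · exact h
    · exact absurd (congrArg Sum.inl (colTop hω h hT)) hk
  · rcases h01 hω (Sum.inr j') c with h | h
    · exact h
    · exact absurd h (hB j')

lemma memM_of (hω : InT ω) {j : Fin q} {c : Fin r}
    (hB : ω (Sum.inr j) c = 1) (hT : ∀ i, ω (Sum.inl i) c ≠ 1) : memM ω j := by
  refine ⟨c, hB, ?_⟩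
  rintro (i' | j') hk
  · rcases h01 hω (Sum.inl i') c with h | h
    · exact h
    · exact absurd h (hT i')
  · rcases h01 hω (Sum.inr j') c with h | h
    · exact h
    · exact absurd (congrArg Sum.inr (colBot hω h hB)) hk

-- disjointness facts
lemma memL_notMemL' {i : Fin p} (h : memL ω i) (h' : memL' ω i) : False := by
  obtain ⟨c, hc, -⟩ := h
  rw [h' c] at hc; exact zero_ne_one hc

lemma memL_ne_sigma (hω : InT ω) (hσ : SigmaSpec ω σ) {l : Fin p} {j : Fin q}
    (hl : memL ω l) (hj : memJ ω j) : σ j ≠ l := by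
  obtain ⟨c, hc, hz⟩ := hl
  obtain ⟨c₀, h1, h2⟩ := hσ j hj
  intro he
  rw [he] at h1
  have : c₀ = c := rowTop hω h1 hc
  rw [this] at h2
  have := hz (Sum.inr j) (by simp)
  rw [this] at h2; exact zero_ne_one h2

lemma memM'_notMemJ {j : Fin q} (h : memM' ω j) (h' : memJ ω j) : False := by
  obtain ⟨c, hc, -⟩ := h'
  rw [h c] at hc; exact zero_ne_one hc

lemma memM_notMemJ (hω : InT ω) {j : Fin q} (h : memM ω j) (h' : memJ ω j) : False := by
  obtain ⟨c, hc, hz⟩ := h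
  obtain ⟨c', hc', i, hi⟩ := h'
  have : c' = c := rowBot hω hc' hc
  rw [this] at hi
  have := hz (Sum.inl i) (by simp)
  rw [this] at hi; exact zero_ne_one hi

lemma memL'_ne_sigma (hω : InT ω) (hσ : SigmaSpec ω σ) {i : Fin p} {j : Fin q}
    (hi : memL' ω i) (hj : memJ ω j) : σ j ≠ i := by
  obtain ⟨c₀, h1, h2⟩ := hσ j hj
  intro he
  rw [he, hi c₀] at h1; exact zero_ne_one h1

lemma sigma_inj (hω : InT ω) (hσ : SigmaSpec ω σ) {j j' : Fin q}
    (hj : memJ ω j) (hj' : memJ ω j') (h : σ j = σ j') : j = j' := by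
  obtain ⟨c, h1, h2⟩ := hσ j hj
  obtain ⟨c', h1', h2'⟩ := hσ j' hj'
  rw [h] at h1
  have : c = c' := rowTop hω h1 h1'
  rw [this] at h2
  exact colBot hω h2 h2'

-- sum collapsing lemmas
lemma sum_top_of_one (hω : InT ω) {i₀ : Fin p} {c : Fin r}
    (h : ω (Sum.inl i₀) c = 1) (f : Fin p → ℂ) :
    ∑ i, f i * ω (Sum.inl i) c = f i₀ := by
  rw [Finset.sum_eq_single i₀]
  · rw [h, mul_one]
  · intro i _ hne
    rcases h01 hω (Sum.inl i) c with h' | h'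
    · rw [h', mul_zero]
    · exact absurd (colTop hω h' h) hne
  · simp

lemma sum_top_of_zero (hω : InT ω) {c : Fin r}
    (h : ∀ i, ω (Sum.inl i) c ≠ 1) (f : Fin p → ℂ) :
    ∑ i, f i * ω (Sum.inl i) c = 0 :=
  Finset.sum_eq_zero fun i _ => by
    rcases h01 hω (Sum.inl i) c with h' | h'
    · rw [h', mul_zero]
    · exact absurd h' (h i)

lemma sum_bot_of_one (hω : InT ω) {j₀ : Fin q} {c : Fin r}
    (h : ω (Sum.inr j₀) c = 1) (f : Fin q → ℂ) :
    ∑ j, f j * ω (Sum.inr j) c = f j₀ := by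
  rw [Finset.sum_eq_single j₀]
  · rw [h, mul_one]
  · intro j _ hne
    rcases h01 hω (Sum.inr j) c with h' | h'
    · rw [h', mul_zero]
    · exact absurd (colBot hω h' h) hne
  · simp

lemma sum_bot_of_zero (hω : InT ω) {c : Fin r}
    (h : ∀ j, ω (Sum.inr j) c ≠ 1) (f : Fin q → ℂ) :
    ∑ j, f j * ω (Sum.inr j) c = 0 :=
  Finset.sum_eq_zero fun j _ => by
    rcases h01 hω (Sum.inr j) c with h' | h'
    · rw [h', mul_zero]
    · exact absurd h' (h j)

end AuxLemmas
section AuxLemmas2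

variable {p q r : ℕ} {ω : MatT p q r} {σ : Fin q → Fin p}

lemma mem_colSpace_iff (hω : InT ω) (hσ : SigmaSpec ω σ) (v : Fin p ⊕ Fin q → ℂ) :
    v ∈ colSpace ω ↔
      ((∀ i, memL' ω i → v (Sum.inl i) = 0) ∧
       (∀ j, memM' ω j → v (Sum.inr j) = 0) ∧
       (∀ j, memJ ω j → v (Sum.inl (σ j)) = v (Sum.inr j))) := by
  constructor
  · rintro ⟨u, rfl⟩
    refine ⟨?_, ?_, ?_⟩
    · intro i hi
      simp only [Matrix.mulVecLin_apply, Matrix.mulVec, dotProduct]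
      exact Finset.sum_eq_zero fun c _ => by rw [hi c, zero_mul]
    · intro j hj
      simp only [Matrix.mulVecLin_apply, Matrix.mulVec, dotProduct]
      exact Finset.sum_eq_zero fun c _ => by rw [hj c, zero_mul]
    · intro j hj
      simp only [Matrix.mulVecLin_apply, Matrix.mulVec, dotProduct]
      exact Finset.sum_congr rfl fun c _ => by rw [top_eq_bot hω hσ hj c]
  · rintro ⟨h1, h2, h3⟩
    classical
    refine ⟨fun c =>
      if h : ∃ i, ω (Sum.inl i) c = 1 then v (Sum.inl h.choose)
      else if h' : ∃ j, ω (Sum.inr j) c = 1 then v (Sum.inr h'.choose) else 0, ?_⟩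
    funext k
    rcases k with i | j
    · simp only [Matrix.mulVecLin_apply, Matrix.mulVec, dotProduct]
      by_cases hT : ∃ c₀, ω (Sum.inl i) c₀ = 1
      · obtain ⟨c₀, hc₀⟩ := hT
        rw [Finset.sum_eq_single c₀]
        · rw [hc₀, one_mul]
          have hEx : ∃ i', ω (Sum.inl i') c₀ = 1 := ⟨i, hc₀⟩
          rw [dif_pos hEx]
          congr 1
          exact congrArg Sum.inl (colTop hω hEx.choose_spec hc₀)
        · intro c _ hne
          rcases h01 hω (Sum.inl i) c with h' | h'
          · rw [h', zero_mul]
          · exact absurd (rowTop hω h' hc₀) hne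
        · simp
      · have hL' : memL' ω i := fun c => by
          rcases h01 hω (Sum.inl i) c with h' | h'
          · exact h'
          · exact absurd ⟨c, h'⟩ hT
        rw [h1 i hL']
        exact Finset.sum_eq_zero fun c _ => by rw [hL' c, zero_mul]
    · simp only [Matrix.mulVecLin_apply, Matrix.mulVec, dotProduct]
      by_cases hB : ∃ c₀, ω (Sum.inr j) c₀ = 1
      · obtain ⟨c₀, hc₀⟩ := hB
        rw [Finset.sum_eq_single c₀]
        · rw [hc₀, one_mul]
          by_cases hEx : ∃ i', ω (Sum.inl i') c₀ = 1
          · rw [dif_pos hEx]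
            have hJ : memJ ω j := memJ_of hc₀ hEx.choose_spec
            have hs : σ j = hEx.choose := sigma_spec hω hσ hc₀ hEx.choose_spec
            rw [← hs, h3 j hJ]
          · rw [dif_neg hEx]
            have hEx' : ∃ j', ω (Sum.inr j') c₀ = 1 := ⟨j, hc₀⟩
            rw [dif_pos hEx']
            congr 1
            exact congrArg Sum.inr (colBot hω hEx'.choose_spec hc₀)
        · intro c _ hne
          rcases h01 hω (Sum.inr j) c with h' | h'
          · rw [h', zero_mul]
          · exact absurd (rowBot hω h' hc₀) hne
        · simp
      · have hM' : memM' ω j := fun c => by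
          rcases h01 hω (Sum.inr j) c with h' | h'
          · exact h'
          · exact absurd ⟨c, h'⟩ hB
        rw [h2 j hM']
        exact Finset.sum_eq_zero fun c _ => by rw [hM' c, zero_mul]

lemma range_le_iff (hω : InT ω) (hσ : SigmaSpec ω σ)
    (x : Matrix (Fin p ⊕ Fin q) (Fin p ⊕ Fin q) ℂ) :
    LinearMap.range x.mulVecLin ≤ colSpace ω ↔
      ((∀ i, memL' ω i → ∀ k', x (Sum.inl i) k' = 0) ∧
       (∀ j, memM' ω j → ∀ k', x (Sum.inr j) k' = 0) ∧
       (∀ j, memJ ω j → ∀ k', x (Sum.inl (σ j)) k' = x (Sum.inr j) k')) := by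
  have hcolx : ∀ k', x.mulVecLin (Pi.single k' 1) = fun k => x k k' := by
    intro k'; funext k
    simp [Matrix.mulVecLin_apply, Matrix.mulVec_single]
  constructor
  · intro h
    have hcol : ∀ k', (fun k => x k k') ∈ colSpace ω := fun k' => by
      rw [← hcolx k']; exact h ⟨Pi.single k' 1, rfl⟩
    refine ⟨fun i hi k' => ?_, fun j hj k' => ?_, fun j hj k' => ?_⟩
    · exact ((mem_colSpace_iff hω hσ _).1 (hcol k')).1 i hi
    · exact ((mem_colSpace_iff hω hσ _).1 (hcol k')).2.1 j hj
    · exact ((mem_colSpace_iff hω hσ _).1 (hcol k')).2.2 j hj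
  · rintro ⟨h1, h2, h3⟩ v ⟨u, rfl⟩
    rw [mem_colSpace_iff hω hσ]
    refine ⟨fun i hi => ?_, fun j hj => ?_, fun j hj => ?_⟩
    · simp only [Matrix.mulVecLin_apply, Matrix.mulVec, dotProduct]
      exact Finset.sum_eq_zero fun k' _ => by rw [h1 i hi k', zero_mul]
    · simp only [Matrix.mulVecLin_apply, Matrix.mulVec, dotProduct]
      exact Finset.sum_eq_zero fun k' _ => by rw [h2 j hj k', zero_mul]
    · simp only [Matrix.mulVecLin_apply, Matrix.mulVec, dotProduct]
      exact Finset.sum_congr rfl fun k' _ => by rw [h3 j hj k']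

lemma ker_iff (x : Matrix (Fin p ⊕ Fin q) (Fin p ⊕ Fin q) ℂ) :
    colSpace ω ≤ LinearMap.ker x.mulVecLin ↔
      ∀ (cc : Fin r) (k), (∑ k', x k k' * ω k' cc) = 0 := by
  constructor
  · intro h cc k
    have hmem : (fun k' => ω k' cc) ∈ colSpace ω := by
      refine ⟨Pi.single cc 1, ?_⟩
      funext k'
      simp [Matrix.mulVecLin_apply, Matrix.mulVec_single]
    have := h hmem
    rw [LinearMap.mem_ker] at this
    have := congrFun this k
    simpa only [Matrix.mulVecLin_apply, Matrix.mulVec, dotProduct, Pi.zero_apply] using this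
  · rintro h v ⟨u, rfl⟩
    rw [LinearMap.mem_ker]
    funext k
    simp only [Matrix.mulVecLin_apply, Matrix.mulVec, dotProduct, Pi.zero_apply]
    calc ∑ k', x k k' * ∑ c, ω k' c * u c
        = ∑ k', ∑ c, x k k' * ω k' c * u c := by
          refine Finset.sum_congr rfl fun k' _ => ?_
          rw [Finset.mul_sum]
          exact Finset.sum_congr rfl fun c _ => by ring
      _ = ∑ c, (∑ k', x k k' * ω k' c) * u c := by
          rw [Finset.sum_comm]
          exact Finset.sum_congr rfl fun c _ => by rw [Finset.sum_mul]
      _ = 0 := Finset.sum_eq_zero fun c _ => by rw [h c k, zero_mul]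

end AuxLemmas2
section MainIff

variable {p q r : ℕ} {ω : MatT p q r} {σ : Fin q → Fin p}

lemma iff_one_two (hω : InT ω) (hσ : SigmaSpec ω σ)
    (a : Matrix (Fin p) (Fin p) ℂ) (ha : ∀ i j : Fin p, j ≤ i → a i j = 0) :
    (∃ (b : Matrix (Fin p) (Fin q) ℂ) (c : Matrix (Fin q) (Fin p) ℂ)
        (d : Matrix (Fin q) (Fin q) ℂ), Matrix.fromBlocks a b c d ∈ Dset ω) ↔
      ((∀ j j' : Fin q, memJ ω j → memJ ω j' → j' ≤ j → a (σ j) (σ j') = 0) ∧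
       (∀ i : Fin p, memL' ω i → ∀ l, a i l = 0) ∧
       (∀ l : Fin p, memL ω l → ∀ i, a i l = 0)) := by
  constructor
  · rintro ⟨b, c, d, hA, hD, hR, hK⟩
    rw [range_le_iff hω hσ] at hR
    rw [ker_iff] at hK
    set x := Matrix.fromBlocks a b c d with hx
    -- column of x vanishes at columns from L
    have key1 : ∀ l : Fin p, memL ω l → ∀ k, x k (Sum.inl l) = 0 := by
      intro l hl k
      obtain ⟨cc, hc, hz⟩ := hl
      have h := hK cc k
      rw [Fintype.sum_sum_type] at h
      rw [sum_top_of_one hω hc, sum_bot_of_zero hω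
        (fun j hj => by rw [hz (Sum.inr j) (by simp)] at hj; exact one_ne_zero hj.symm)] at h
      simpa using h
    have key2 : ∀ j : Fin q, memJ ω j → ∀ k,
        x k (Sum.inl (σ j)) + x k (Sum.inr j) = 0 := by
      intro j hj k
      obtain ⟨cc, h1, h2⟩ := hσ j hj
      have h := hK cc k
      rw [Fintype.sum_sum_type] at h
      rwa [sum_top_of_one hω h1, sum_bot_of_one hω h2] at h
    refine ⟨?_, ?_, ?_⟩
    · intro j j' hj hj' hle
      have e1 := key2 j' hj' (Sum.inr j)
      have e2 : x (Sum.inr j) (Sum.inr j') = 0 := hD j j' hle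
      rw [e2, add_zero] at e1
      have e3 := hR.2.2 j hj (Sum.inl (σ j'))
      show x (Sum.inl (σ j)) (Sum.inl (σ j')) = 0
      rw [e3, e1]
    · intro i hi l
      exact hR.1 i hi (Sum.inl l)
    · intro l hl i
      exact key1 l hl (Sum.inl i)
  · rintro ⟨P1, P2, P3⟩
    classical
    refine ⟨Matrix.of fun i j => if memJ ω j then -a i (σ j) else 0,
      Matrix.of fun j i => if memJ ω j then a (σ j) i else 0,
      Matrix.of fun j j' => if memJ ω j ∧ memJ ω j' then -a (σ j) (σ j') else 0,
      ?_, ?_, ?_, ?_⟩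
    · intro i j hle
      simpa using ha i j hle
    · intro i j hle
      show (if memJ ω i ∧ memJ ω j then -a (σ i) (σ j) else 0) = 0
      split
      · next h => rw [P1 i j h.1 h.2 hle, neg_zero]
      · rfl
    · rw [range_le_iff hω hσ]
      refine ⟨?_, ?_, ?_⟩
      · rintro i hi (l | m)
        · exact P2 i hi l
        · show (if memJ ω m then -a i (σ m) else 0) = 0
          split
          · rw [P2 i hi (σ m), neg_zero]
          · rfl
      · rintro j hj (i | j')
        · show (if memJ ω j then a (σ j) i else 0) = 0
          rw [if_neg (fun h => memM'_notMemJ hj h)]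
        · show (if memJ ω j ∧ memJ ω j' then -a (σ j) (σ j') else 0) = 0
          rw [if_neg (fun h => memM'_notMemJ hj h.1)]
      · rintro j hj (i | m)
        · show a (σ j) i = (if memJ ω j then a (σ j) i else 0)
          rw [if_pos hj]
        · show (if memJ ω m then -a (σ j) (σ m) else 0)
            = (if memJ ω j ∧ memJ ω m then -a (σ j) (σ m) else 0)
          by_cases hm : memJ ω m
          · rw [if_pos hm, if_pos ⟨hj, hm⟩]
          · rw [if_neg hm, if_neg (fun h => hm h.2)]
    · rw [ker_iff]
      intro cc k
      rw [Fintype.sum_sum_type]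
      by_cases hT : ∃ i, ω (Sum.inl i) cc = 1
      · obtain ⟨i₀, hi₀⟩ := hT
        rw [sum_top_of_one hω hi₀]
        by_cases hB : ∃ j, ω (Sum.inr j) cc = 1
        · obtain ⟨j₀, hj₀⟩ := hB
          rw [sum_bot_of_one hω hj₀]
          have hJ0 : memJ ω j₀ := memJ_of hj₀ hi₀
          have hs : σ j₀ = i₀ := sigma_spec hω hσ hj₀ hi₀
          rcases k with i' | j'
          · show a i' i₀ + (if memJ ω j₀ then -a i' (σ j₀) else 0) = 0
            rw [if_pos hJ0, hs, add_neg_cancel]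
          · show (if memJ ω j' then a (σ j') i₀ else 0)
              + (if memJ ω j' ∧ memJ ω j₀ then -a (σ j') (σ j₀) else 0) = 0
            by_cases hj' : memJ ω j'
            · rw [if_pos hj', if_pos ⟨hj', hJ0⟩, hs, add_neg_cancel]
            · rw [if_neg hj', if_neg (fun h => hj' h.1), add_zero]
        · rw [sum_bot_of_zero hω (fun j hj => hB ⟨j, hj⟩), add_zero]
          have hL : memL ω i₀ := memL_of hω hi₀ (fun j hj => hB ⟨j, hj⟩)
          rcases k with i' | j'
          · exact P3 i₀ hL i'
          · show (if memJ ω j' then a (σ j') i₀ else 0) = 0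
            split
            · exact P3 i₀ hL _
            · rfl
      · rw [sum_top_of_zero hω (fun i hi => hT ⟨i, hi⟩), zero_add]
        by_cases hB : ∃ j, ω (Sum.inr j) cc = 1
        · obtain ⟨j₀, hj₀⟩ := hB
          rw [sum_bot_of_one hω hj₀]
          have hM : memM ω j₀ := memM_of hω hj₀ (fun i hi => hT ⟨i, hi⟩)
          have hnJ : ¬ memJ ω j₀ := fun h => memM_notMemJ hω hM h
          rcases k with i' | j'
          · show (if memJ ω j₀ then -a i' (σ j₀) else 0) = 0
            rw [if_neg hnJ]
          · show (if memJ ω j' ∧ memJ ω j₀ then -a (σ j') (σ j₀) else 0) = 0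
            rw [if_neg (fun h => hnJ h.2)]
        · exact sum_bot_of_zero hω (fun j hj => hB ⟨j, hj⟩) _

end MainIff
/-- characterization of the strictly upper triangular matrices `a`
arising as the upper-left block of an element of `D_ω`, via the permutation
`w = w_{𝔨,+}`. -/
theorem upper_left_block_of_Dset (p q r : ℕ) (hr : r ≤ p + q) (ω : MatT p q r)
    (hω : InT ω) (σ : Fin q → Fin p)
    (hσ : ∀ j, memJ ω j → ∃ c, ω (Sum.inl (σ j)) c = 1 ∧ ω (Sum.inr j) c = 1)
    (s k s' : ℕ)
    (hks : s = Nat.card {i : Fin p // memL ω i})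
    (hkk : k = Nat.card {j : Fin q // memJ ω j})
    (hks' : s' = Nat.card {i : Fin p // memL' ω i})
    (hp : p = s + k + s')
    (ℓe : Fin s → Fin p) (hℓe : StrictMono ℓe) (hℓer : ∀ i, memL ω i ↔ ∃ a, ℓe a = i)
    (je : Fin k → Fin q) (hje : StrictMono je) (hjer : ∀ j, memJ ω j ↔ ∃ a, je a = j)
    (ℓ'e : Fin s' → Fin p) (hℓ'e : StrictMono ℓ'e)
    (hℓ'er : ∀ i, memL' ω i ↔ ∃ a, ℓ'e a = i)
    (w : Equiv.Perm (Fin p))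
    (hw1 : ∀ (i : Fin p) (h : (i : ℕ) < s), w i = ℓe ⟨s - 1 - (i : ℕ), by omega⟩)
    (hw2 : ∀ (i : Fin p) (h1 : s ≤ (i : ℕ)) (h2 : (i : ℕ) < s + k),
      w i = σ (je ⟨(i : ℕ) - s, by omega⟩))
    (hw3 : ∀ (i : Fin p) (h : s + k ≤ (i : ℕ)),
      w i = ℓ'e ⟨s' - 1 - ((i : ℕ) - s - k), by have := i.isLt; omega⟩)
    (a : Matrix (Fin p) (Fin p) ℂ) (ha : ∀ i j : Fin p, j ≤ i → a i j = 0) :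
    ((∃ (b : Matrix (Fin p) (Fin q) ℂ) (c : Matrix (Fin q) (Fin p) ℂ)
        (d : Matrix (Fin q) (Fin q) ℂ), Matrix.fromBlocks a b c d ∈ Dset ω) ↔
      ((∀ j j' : Fin q, memJ ω j → memJ ω j' → j' ≤ j → a (σ j) (σ j') = 0) ∧
       (∀ i : Fin p, memL' ω i → ∀ l, a i l = 0) ∧
       (∀ l : Fin p, memL ω l → ∀ i, a i l = 0))) ∧
    ((∃ (b : Matrix (Fin p) (Fin q) ℂ) (c : Matrix (Fin q) (Fin p) ℂ)
        (d : Matrix (Fin q) (Fin q) ℂ), Matrix.fromBlocks a b c d ∈ Dset ω) ↔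
      (∀ i j : Fin p, j ≤ i → a (w i) (w j) = 0)) := by
  have H1 := iff_one_two hω hσ a ha
  have H23 :
      ((∀ j j' : Fin q, memJ ω j → memJ ω j' → j' ≤ j → a (σ j) (σ j') = 0) ∧
       (∀ i : Fin p, memL' ω i → ∀ l, a i l = 0) ∧
       (∀ l : Fin p, memL ω l → ∀ i, a i l = 0)) ↔
      (∀ i j : Fin p, j ≤ i → a (w i) (w j) = 0) := by
    constructor
    · rintro ⟨P1, P2, P3⟩ i j hij
      have hij' : (j : ℕ) ≤ (i : ℕ) := hij
      rcases lt_or_ge (j : ℕ) s with hj | hj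
      · -- w j ∈ L
        have hL : memL ω (w j) := by
          rw [hw1 j hj]; exact (hℓer _).2 ⟨_, rfl⟩
        exact P3 _ hL _
      · rcases lt_or_ge (i : ℕ) (s + k) with hi | hi
        · -- both middle
          have hi' : s ≤ (i : ℕ) := le_trans hj hij'
          have hjk : (j : ℕ) < s + k := lt_of_le_of_lt hij' hi
          rw [hw2 i hi' hi, hw2 j hj hjk]
          refine P1 _ _ ((hjer _).2 ⟨_, rfl⟩) ((hjer _).2 ⟨_, rfl⟩) ?_
          exact hje.monotone (by rw [Fin.mk_le_mk]; omega)
        · -- w i ∈ L'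
          have hL' : memL' ω (w i) := by
            rw [hw3 i hi]; exact (hℓ'er _).2 ⟨_, rfl⟩
          exact P2 _ hL' _
    · intro P
      refine ⟨?_, ?_, ?_⟩
      · intro j j' hj hj' hle
        obtain ⟨m, rfl⟩ := (hjer j).1 hj
        obtain ⟨m', rfl⟩ := (hjer j').1 hj'
        have hm : m' ≤ m := hje.le_iff_le.mp hle
        have hmp : s + (m : ℕ) < p := by have := m.isLt; omega
        have hmp' : s + (m' : ℕ) < p := by have := m'.isLt; omega
        have e1 : σ (je m) = w ⟨s + (m : ℕ), hmp⟩ := by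
          rw [hw2 ⟨s + (m : ℕ), hmp⟩ (by simp) (by have := m.isLt; show s + _ < s + k; omega)]
          congr 1
          ext
          simp
        have e2 : σ (je m') = w ⟨s + (m' : ℕ), hmp'⟩ := by
          rw [hw2 ⟨s + (m' : ℕ), hmp'⟩ (by simp) (by have := m'.isLt; show s + _ < s + k; omega)]
          congr 1
          ext
          simp
        rw [e1, e2]
        exact P _ _ (by rw [Fin.mk_le_mk]; omega)
      · intro i hi l
        obtain ⟨m, rfl⟩ := (hℓ'er i).1 hi
        have hm := m.isLt
        have htp : s + k + (s' - 1 - (m : ℕ)) < p := by omega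
        set t : Fin p := ⟨s + k + (s' - 1 - (m : ℕ)), htp⟩ with hts
        have hwt : w t = ℓ'e m := by
          rw [hw3 t (by simp [hts])]
          congr 1
          ext
          simp [hts]
          omega
        set u : Fin p := w.symm l with hus
        rcases le_or_gt u t with h | h
        · rw [← hwt, ← w.apply_symm_apply l]
          exact P t u h
        · have hu : s + k ≤ (u : ℕ) := by
            have := h
            rw [Fin.lt_def] at this
            simp [hts] at this
            omega
          have hup := u.isLt
          have hl' : l = ℓ'e ⟨s' - 1 - ((u : ℕ) - s - k), by omega⟩ := by
            rw [← hw3 u hu, hus, w.apply_symm_apply]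
          have hlt : l < ℓ'e m := by
            rw [hl']
            apply hℓ'e
            rw [Fin.mk_lt_mk]
            have : (t : ℕ) < (u : ℕ) := h
            simp [hts] at this
            omega
          exact ha _ _ hlt.le
      · intro l hl i
        obtain ⟨m, rfl⟩ := (hℓer l).1 hl
        have hm := m.isLt
        have hup : s - 1 - (m : ℕ) < p := by omega
        set u : Fin p := ⟨s - 1 - (m : ℕ), hup⟩ with hus
        have hwu : w u = ℓe m := by
          rw [hw1 u (by simp [hus]; omega)]
          congr 1
          ext
          simp [hus]
          omega
        set t : Fin p := w.symm i with hts
        rcases le_or_gt u t with h | h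
        · rw [← hwu, ← w.apply_symm_apply i]
          exact P t u h
        · have ht : (t : ℕ) < s := by
            have := h
            rw [Fin.lt_def] at this
            simp [hus] at this
            omega
          have hi' : i = ℓe ⟨s - 1 - (t : ℕ), by omega⟩ := by
            rw [← hw1 t ht, hts, w.apply_symm_apply]
          have hlt : ℓe m < i := by
            rw [hi']
            apply hℓe
            rw [Fin.mk_lt_mk]
            have : (t : ℕ) < (u : ℕ) := h
            simp [hus] at this
            omega
          exact ha _ _ hlt.le
  exact ⟨H1, H1.trans H23⟩
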